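/- arXiv:2005.11230 — 2 statements merged into one kernel-verified Lean document; each statement's English description precedes it below -/
import Mathlib

section
/- Let X be a non-separable Banach space over ℂ and let 0 < M < 1. Then there exists an uncountable index set I and a family {x_α}_{α∈I} ⊆ X of vectors of norm 1 such that for all pairwise distinct indices α_1, …, α_n ∈ I and all nonzero scalars c_1, …, c_n ∈ ℂ\{0}, one has ‖Σ_{i=1}^n c_i x_{α_i}‖ > M · min{ |c_i| : 1 ≤ i ≤ n }. -/
open scoped BigOperators

open Cardinal Set TopologicalSpace

/-!
Fix `M < r < 1` and index by `ω₁`, whose proper initial segments are countable. By transfinite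
recursion choose unit vectors `x_α` at distance at least `r` from the span of `{x_β | β < α}`:
this span is the span of a countable set, hence separable, so its closure is a proper closed
subspace and the Riesz lemma applies. In a combination `∑ cᵢ x_{αᵢ}`, factoring out the
coefficient of the largest index `α_k` leaves `x_{α_k}` minus a vector of that span, so the norm
is at least `r ‖c_k‖ > M min ‖cᵢ‖`.
-/

theorem exists_norm_eq_one_forall_le_norm_sub_of_countable {𝕜 X : Type*} [RCLike 𝕜]
    [NormedAddCommGroup X] [NormedSpace 𝕜 X] (hX : ¬ SeparableSpace X) {r : ℝ} (hr : r < 1)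
    {s : Set X} (hs : s.Countable) :
    ∃ x : X, ‖x‖ = 1 ∧ ∀ y ∈ Submodule.span 𝕜 s, r ≤ ‖x - y‖ := by
  have hF : ∃ z : X, z ∉ (Submodule.span 𝕜 s).topologicalClosure := by
    by_contra! h
    have hsep : IsSeparable ((Submodule.span 𝕜 s).topologicalClosure : Set X) := by
      rw [Submodule.topologicalClosure_coe]
      exact hs.isSeparable.span.closure
    exact hX <| isSeparable_univ_iff.1 <| hsep.mono fun z _ => h z
  obtain ⟨x, -, hx1, hx⟩ := riesz_lemma_of_lt_one (Submodule.isClosed_topologicalClosure _) hF hr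
  exact ⟨x, hx1, fun y hy => hx y (Submodule.le_topologicalClosure _ hy)⟩

theorem exists_forall_image_Iio_of_countable {ι α : Type*} [LinearOrder ι] [WellFoundedLT ι]
    (hι : ∀ i : ι, (Iio i).Countable) {p : Set α → α → Prop}
    (hp : ∀ s : Set α, s.Countable → ∃ a, p s a) :
    ∃ f : ι → α, ∀ i, p (f '' Iio i) (f i) := by
  choose pick hpick using fun s : {s : Set α // s.Countable} => hp s.1 s.2
  have hrange : ∀ i (g : Iio i → α), (range g).Countable := fun i g =>
    haveI := (hι i).to_subtype
    countable_range g
  let f : ι → α := wellFounded_lt.fix fun i g => pick ⟨range fun j : Iio i => g j j.2, hrange i _⟩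
  refine ⟨f, fun i => ?_⟩
  have hfi : f i = pick ⟨f '' Iio i, (hι i).image f⟩ := by
    refine (wellFounded_lt.fix_eq _ i).trans ?_
    simp only [image_eq_range]
    rfl
  rw [hfi]
  exact hpick ⟨_, _⟩

theorem mul_norm_le_norm_sum_smul_of_forall_le_norm_sub {𝕜 X ι κ : Type*} [RCLike 𝕜]
    [NormedAddCommGroup X] [NormedSpace 𝕜 X] [LinearOrder ι] [Fintype κ] {r : ℝ} {f : ι → X}
    (hf : ∀ i, ∀ y ∈ Submodule.span 𝕜 (f '' Iio i), r ≤ ‖f i - y‖) {α : κ → ι}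
    (hα : Function.Injective α) (c : κ → 𝕜) {k : κ} (hk : ∀ j, α j ≤ α k) :
    r * ‖c k‖ ≤ ‖∑ j, c j • f (α j)‖ := by
  classical
  rcases eq_or_ne (c k) 0 with hck | hck
  · simp [hck]
  set y := -((c k)⁻¹ • ∑ j ∈ Finset.univ.erase k, c j • f (α j))
  have hy : y ∈ Submodule.span 𝕜 (f '' Iio (α k)) := by
    refine Submodule.neg_mem _ <| Submodule.smul_mem _ _ <|
      Submodule.sum_mem _ fun j hj => Submodule.smul_mem _ _ ?_
    refine Submodule.subset_span ⟨α j, (hk j).lt_of_ne fun h => ?_, rfl⟩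
    exact Finset.ne_of_mem_erase hj (hα h)
  have hsum : ∑ j, c j • f (α j) = c k • (f (α k) - y) := by
    rw [smul_sub, smul_neg, smul_inv_smul₀ hck, sub_neg_eq_add]
    exact (Finset.add_sum_erase _ _ (Finset.mem_univ k)).symm
  rw [hsum, norm_smul, mul_comm]
  exact mul_le_mul_of_nonneg_left (hf _ y hy) (norm_nonneg _)

theorem countable_Iio_aleph_one_ord_toType (i : (ℵ₁ : Cardinal.{0}).ord.ToType) :
    (Iio i).Countable := by
  rw [← le_aleph0_iff_set_countable, ← Order.lt_succ_iff, succ_aleph0]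
  simpa using mk_Iio_lt i (by simp)

theorem not_countable_aleph_one_ord_toType : ¬ Countable (ℵ₁ : Cardinal.{0}).ord.ToType := by
  rw [← mk_le_aleph0_iff, mk_ord_toType, not_le]
  exact aleph0_lt_aleph_one

theorem exists_uncountable_family_of_not_separable_general
    (X : Type*) [NormedAddCommGroup X] [NormedSpace ℂ X]
    (hX : ¬ TopologicalSpace.SeparableSpace X)
    (M : ℝ) (hM0 : 0 < M) (hM1 : M < 1) :
    ∃ (I : Type) (x : I → X), ¬ Countable I ∧ (∀ α, ‖x α‖ = 1) ∧
      ∀ (n : ℕ), 0 < n → ∀ (α : Fin n → I), Function.Injective α →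
        ∀ c : Fin n → ℂ, (∀ i, c i ≠ 0) →
          M * (⨅ i, ‖c i‖) < ‖∑ i, c i • x (α i)‖ := by
  obtain ⟨r, hMr, hr1⟩ := exists_between hM1
  obtain ⟨x, hx⟩ := exists_forall_image_Iio_of_countable countable_Iio_aleph_one_ord_toType
    fun _ hs => exists_norm_eq_one_forall_le_norm_sub_of_countable (𝕜 := ℂ) hX hr1 hs
  refine ⟨_, x, not_countable_aleph_one_ord_toType, fun i => (hx i).1, fun n hn α hα c hc => ?_⟩
  have : Nonempty (Fin n) := ⟨⟨0, hn⟩⟩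
  obtain ⟨k, hk⟩ := Finite.exists_max α
  have hck : 0 < ‖c k‖ := norm_pos_iff.2 (hc k)
  calc M * (⨅ i, ‖c i‖) ≤ M * ‖c k‖ :=
        mul_le_mul_of_nonneg_left (ciInf_le ⟨0, by rintro _ ⟨i, rfl⟩; positivity⟩ k) hM0.le
    _ < r * ‖c k‖ := mul_lt_mul_of_pos_right hMr hck
    _ ≤ ‖∑ i, c i • x (α i)‖ :=
        mul_norm_le_norm_sum_smul_of_forall_le_norm_sub (fun i => (hx i).2) hα c hk

/-- In a non-separable complex Banach space, for any `0 < M < 1` there is an uncountable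
family of unit vectors such that every nontrivial finite linear combination with nonzero
coefficients has norm greater than `M` times the minimum modulus of the coefficients. -/
theorem exists_uncountable_family_of_not_separable
    (X : Type*) [NormedAddCommGroup X] [NormedSpace ℂ X] [CompleteSpace X]
    (hX : ¬ TopologicalSpace.SeparableSpace X)
    (M : ℝ) (hM0 : 0 < M) (hM1 : M < 1) :
    ∃ (I : Type) (x : I → X), ¬ Countable I ∧ (∀ α, ‖x α‖ = 1) ∧
      ∀ (n : ℕ), 0 < n → ∀ (α : Fin n → I), Function.Injective α →
        ∀ c : Fin n → ℂ, (∀ i, c i ≠ 0) →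
          M * (⨅ i, ‖c i‖) < ‖∑ i, c i • x (α i)‖ :=
  exists_uncountable_family_of_not_separable_general X hX M hM0 hM1
end

section
/- Let (G,S,p,ω,Γ) be an admissible tuple and suppose that for every compact subset K ⊆ G and all ε, δ > 0, there exist s ∈ S, λ ∈ Γ\{0} and a compact subset E ⊆ K such that μ(K \ E) < δ, |λ|·ess sup_{sE} ω < ε, and (1/|λ|)·ess sup_{s⁻¹E} ω < ε. Then, for every compact set L ⊆ G, s can in addition be chosen outside L; that is, for every compact K ⊆ G, compact L ⊆ G and all ε, δ > 0, there exist s ∈ S\L, λ ∈ Γ\{0} and a compact E ⊆ K with μ(K \ E) < δ, |λ|·ess sup_{sE} ω < ε and (1/|λ|)·ess sup_{s⁻¹E} ω < ε. -/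
/-!
A positive function cannot be essentially arbitrarily small on subsets of measure `≥ m > 0` of a
fixed set of finite measure: otherwise, taking such subsets for `ε = 1/(n+1)`, their limsup would
have measure `≥ m`, and at a point lying in infinitely many of them the function would vanish
(measurable hulls deal with `ω` not being measurable). Apply this to `L K ∪ L⁻¹ K` and
`m = μ K - δ` to get a threshold `η`, and ask for witnesses with `ε < η`. As `|λ| · |λ|⁻¹ = 1`,
one of the translates `s E`, `s⁻¹ E` carries an essential supremum of `ω` below `η`, while its
measure is `μ E ≥ m`; so it cannot lie in `L K ∪ L⁻¹ K`, which forces `s ∉ L`.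
-/

open MeasureTheory ENNReal Set Pointwise Filter

noncomputable section

/-- Left translation operator `(T_s f)(t) = f (s⁻¹ t)`. -/
def transl {G : Type*} [Group G] (s : G) (f : G → ℂ) : G → ℂ := fun t => f (s⁻¹ * t)

/-- Weighted `L^p` norm `‖f‖_{p,ω}` as an extended nonnegative real. -/
def wNorm {G : Type*} [MeasurableSpace G] (μ : Measure G) (p : ℝ) (ω : G → ℝ)
    (f : G → ℂ) : ℝ≥0∞ :=
  (∫⁻ t, (‖f t‖₊ : ℝ≥0∞) ^ p * (ENNReal.ofReal (ω t)) ^ p ∂μ) ^ (1 / p)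

/-- Membership in the weighted space `L^p(G,ω)`. -/
def MemWLp {G : Type*} [MeasurableSpace G] (μ : Measure G) (p : ℝ) (ω : G → ℝ)
    (f : G → ℂ) : Prop :=
  AEMeasurable f μ ∧ wNorm μ p ω f < ⊤

/-- Local norm `‖g‖_{p,K}` of a nonnegative function over a subset `K`. -/
def locNorm {G : Type*} [MeasurableSpace G] (μ : Measure G) (p : ℝ) (g : G → ℝ)
    (K : Set G) : ℝ≥0∞ :=
  (∫⁻ t in K, (ENNReal.ofReal (g t)) ^ p ∂μ) ^ (1 / p)

/-- `ω` is an `S`-admissible weight: every left translation by `s ∈ S` is bounded. -/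
def SAdmissible {G : Type*} [Group G] [MeasurableSpace G] (μ : Measure G) (ω : G → ℝ)
    (S : Set G) : Prop :=
  ∀ s ∈ S, essSup (fun t => ENNReal.ofReal (ω (s * t) / ω t)) μ < ⊤

/-- `ω` is locally `p`-integrable. -/
def LocPIntegrable {G : Type*} [TopologicalSpace G] [MeasurableSpace G] (μ : Measure G)
    (p : ℝ) (ω : G → ℝ) : Prop :=
  ∀ K : Set G, IsCompact K → ∫⁻ t in K, (ENNReal.ofReal (ω t)) ^ p ∂μ < ⊤

/-- `f` is a `(Γ,S)`-dense vector in `L^p(G,ω)`. -/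
def GammaSDense {G : Type*} [Group G] [MeasurableSpace G] (μ : Measure G) (p : ℝ)
    (ω : G → ℝ) (Γ : Set ℂ) (S : Set G) (f : G → ℂ) : Prop :=
  MemWLp μ p ω f ∧
    ∀ g : G → ℂ, MemWLp μ p ω g → ∀ ε : ℝ, 0 < ε →
      ∃ lam ∈ Γ, ∃ s ∈ S,
        wNorm μ p ω (fun t => lam * transl s f t - g t) < ENNReal.ofReal ε

/-- `f` is an `S`-dense vector in `L^p(G,ω)`. -/
def SDense {G : Type*} [Group G] [MeasurableSpace G] (μ : Measure G) (p : ℝ)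
    (ω : G → ℝ) (S : Set G) (f : G → ℂ) : Prop :=
  MemWLp μ p ω f ∧
    ∀ g : G → ℂ, MemWLp μ p ω g → ∀ ε : ℝ, 0 < ε →
      ∃ s ∈ S, wNorm μ p ω (fun t => transl s f t - g t) < ENNReal.ofReal ε

open Topology

section Measure

variable {α : Type*} [MeasurableSpace α] {μ : Measure α}

theorem le_measure_limsup_atTop {F : ℕ → Set α} {m : ℝ≥0∞} (hF : ∀ n, MeasurableSet (F n))
    (hfin : μ (⋃ n, F n) ≠ ∞) (hle : ∀ n, m ≤ μ (F n)) : m ≤ μ (limsup F atTop) := by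
  rw [limsup_eq_iInf_iSup_of_nat]
  change m ≤ μ (⋂ n, ⋃ i ≥ n, F i)
  have hanti : Antitone fun n => ⋃ i ≥ n, F i :=
    fun a b hab => biUnion_mono (fun i hi => le_trans hab hi) fun _ _ => subset_rfl
  rw [hanti.measure_iInter
    (fun n => (MeasurableSet.biUnion (to_countable _) fun i _ => hF i).nullMeasurableSet)
    ⟨0, ne_top_of_le_ne_top hfin (measure_mono (iUnion₂_subset fun i _ => subset_iUnion F i))⟩]
  exact le_iInf fun n =>
    (hle n).trans (measure_mono (subset_iUnion₂ (s := fun i (_ : i ≥ n) => F i) n le_rfl))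

theorem exists_measurableSet_subset_of_ae_restrict {p : α → Prop} {A U : Set α}
    (hU : MeasurableSet U) (hAU : A ⊆ U) (h : ∀ᵐ x ∂μ.restrict A, p x) :
    ∃ F ⊆ U, MeasurableSet F ∧ (∀ x ∈ F, p x) ∧ μ A ≤ μ F := by
  obtain ⟨T, hpT, hT, hT0⟩ := exists_measurable_superset_of_null (ae_iff.mp h)
  refine ⟨U \ T, sdiff_subset, hU.diff hT, fun x hx => not_not.mp fun hpx => hx.2 (hpT hpx), ?_⟩
  have hTA : μ (T ∩ A) = 0 :=
    nonpos_iff_eq_zero.mp ((Measure.le_restrict_apply A T).trans hT0.le)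
  calc μ A ≤ μ (U \ T ∪ T ∩ A) := measure_mono fun x hx => by
        by_cases hxT : x ∈ T
        exacts [Or.inr ⟨hxT, hx⟩, Or.inl ⟨hAU hx, hxT⟩]
    _ ≤ μ (U \ T) + μ (T ∩ A) := measure_union_le _ _
    _ = μ (U \ T) := by rw [hTA, add_zero]

theorem exists_pos_le_essSup_restrict {f : α → ℝ≥0∞} (hf : ∀ x, f x ≠ 0) {C : Set α}
    (hC : μ C ≠ ∞) {m : ℝ≥0∞} (hm : m ≠ 0) :
    ∃ η : ℝ, 0 < η ∧ ∀ A ⊆ C, m ≤ μ A → ENNReal.ofReal η ≤ essSup f (μ.restrict A) := by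
  by_contra! h
  choose A hAC hAm hAf using fun n : ℕ => h (1 / (n + 1)) Nat.one_div_pos_of_nat
  choose F hFU hF hFf hAF using fun n =>
    exists_measurableSet_subset_of_ae_restrict (measurableSet_toMeasurable μ C)
      ((hAC n).trans (subset_toMeasurable μ C)) (ae_lt_of_essSup_lt (hAf n))
  have hlimsup : m ≤ μ (limsup F atTop) :=
    le_measure_limsup_atTop hF
      (ne_top_of_le_ne_top (by rwa [measure_toMeasurable]) (measure_mono (iUnion_subset hFU)))
      fun n => (hAm n).trans (hAF n)
  obtain ⟨x, hx⟩ := nonempty_of_measure_ne_zero (ne_bot_of_le_ne_bot hm hlimsup)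
  have hsmall : Tendsto (fun n : ℕ => ENNReal.ofReal (1 / (n + 1))) atTop (𝓝 0) := by
    simpa using ENNReal.tendsto_ofReal tendsto_one_div_add_atTop_nhds_zero_nat
  obtain ⟨n, hxn, hn⟩ := ((mem_limsup_iff_frequently_mem.mp hx).and_eventually
    (hsmall.eventually_lt_const (pos_iff_ne_zero.mpr (hf x)))).exists
  exact (hFf n x hxn).not_gt hn

end Measure

theorem ENNReal.lt_or_lt_of_mul_lt_of_inv_mul_lt {r a b e : ℝ≥0∞} (hr0 : r ≠ 0) (hrT : r ≠ ∞)
    (ha : r * a < e) (hb : r⁻¹ * b < e) : a < e ∨ b < e := by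
  by_contra! h
  have hprod : r * a * (r⁻¹ * b) = a * b := by
    rw [mul_mul_mul_comm, ENNReal.mul_inv_cancel hr0 hrT, one_mul]
  exact (ENNReal.mul_lt_mul ha hb).not_ge (hprod ▸ mul_le_mul' h.1 h.2)

section Translates

variable {G : Type*} [Group G] [TopologicalSpace G] [MeasurableSpace G]

def SmallOnTranslates (μ : Measure G) (ω : G → ℝ) (K : Set G) (ε δ : ℝ) (s : G) (lam : ℂ)
    (E : Set G) : Prop :=
  IsCompact E ∧ E ⊆ K ∧ μ (K \ E) < ENNReal.ofReal δ ∧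
    ENNReal.ofReal ‖lam‖ * essSup (fun t => ENNReal.ofReal (ω t)) (μ.restrict (s • E)) <
      ENNReal.ofReal ε ∧
    (ENNReal.ofReal ‖lam‖)⁻¹ * essSup (fun t => ENNReal.ofReal (ω t)) (μ.restrict (s⁻¹ • E)) <
      ENNReal.ofReal ε

variable {μ : Measure G} {ω : G → ℝ} {K E : Set G} {ε δ : ℝ} {s : G} {lam : ℂ}

theorem smallOnTranslates_empty (hK : μ K = 0) (hε : 0 < ε) (hδ : 0 < δ) :
    SmallOnTranslates μ ω K ε δ s lam ∅ := by
  refine ⟨isCompact_empty, empty_subset K, ?_, ?_, ?_⟩ <;>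
    simp [hK, smul_set_empty, hε, hδ]

namespace SmallOnTranslates

theorem mono {ε' δ' : ℝ} (h : SmallOnTranslates μ ω K ε δ s lam E) (hε : ε ≤ ε') (hδ : δ ≤ δ') :
    SmallOnTranslates μ ω K ε' δ' s lam E :=
  let ⟨hE, hEK, hKE, h₁, h₂⟩ := h
  ⟨hE, hEK, hKE.trans_le (ofReal_le_ofReal hδ), h₁.trans_le (ofReal_le_ofReal hε),
    h₂.trans_le (ofReal_le_ofReal hε)⟩

theorem measure_sub_le (h : SmallOnTranslates μ ω K ε δ s lam E) :
    μ K - ENNReal.ofReal δ ≤ μ E :=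
  tsub_le_iff_right.mpr <| calc
    μ K ≤ μ (E ∪ K \ E) := measure_mono (sdiff_subset_iff.mp subset_rfl)
    _ ≤ μ E + μ (K \ E) := measure_union_le _ _
    _ ≤ μ E + ENNReal.ofReal δ := by gcongr; exact h.2.2.1.le

theorem essSup_lt_or_essSup_lt (h : SmallOnTranslates μ ω K ε δ s lam E) (hlam : lam ≠ 0) :
    essSup (fun t => ENNReal.ofReal (ω t)) (μ.restrict (s • E)) < ENNReal.ofReal ε ∨
      essSup (fun t => ENNReal.ofReal (ω t)) (μ.restrict (s⁻¹ • E)) < ENNReal.ofReal ε :=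
  ENNReal.lt_or_lt_of_mul_lt_of_inv_mul_lt (ofReal_pos.mpr (norm_pos_iff.mpr hlam)).ne'
    ofReal_ne_top h.2.2.2.1 h.2.2.2.2

end SmallOnTranslates

theorem exists_smallOnTranslates_notMem [IsTopologicalGroup G] [μ.IsHaarMeasure]
    {S : Set G} {Γ : Set ℂ} (hpos : ∀ t, 0 < ω t) (hK : IsCompact K) (hK0 : μ K ≠ 0)
    (hyp : ∀ ε δ : ℝ, 0 < ε → 0 < δ →
      ∃ s ∈ S, ∃ lam ∈ Γ \ {0}, ∃ E, SmallOnTranslates μ ω K ε δ s lam E)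
    {L : Set G} (hL : IsCompact L) (hε : 0 < ε) (hδ : 0 < δ) :
    ∃ s ∈ S \ L, ∃ lam ∈ Γ \ {0}, ∃ E, SmallOnTranslates μ ω K ε δ s lam E := by
  obtain ⟨δ', hδ'δ, hδ'0, hδ'K⟩ : ∃ δ', δ' ≤ δ ∧ 0 < δ' ∧ ENNReal.ofReal δ' < μ K := by
    obtain ⟨r, -, hr0, hrK⟩ := ENNReal.lt_iff_exists_real_btwn.mp (pos_iff_ne_zero.mpr hK0)
    exact ⟨min δ r, min_le_left _ _, lt_min hδ (ofReal_pos.mp hr0),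
      (ofReal_le_ofReal (min_le_right _ _)).trans_lt hrK⟩
  obtain ⟨η, hη0, hη⟩ := exists_pos_le_essSup_restrict (μ := μ)
    (fun t => (ofReal_pos.mpr (hpos t)).ne') ((hL.mul hK).union (hL.inv.mul hK)).measure_lt_top.ne
    (tsub_pos_of_lt hδ'K).ne'
  obtain ⟨s, hsS, lam, hlam, E, hE⟩ := hyp (min ε η) δ' (lt_min hε hη0) hδ'0
  refine ⟨s, ⟨hsS, fun hsL => ?_⟩, lam, hlam, E, hE.mono (min_le_left _ _) hδ'δ⟩
  have hsmall : ENNReal.ofReal (min ε η) ≤ ENNReal.ofReal η := ofReal_le_ofReal (min_le_right _ _)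
  rcases hE.essSup_lt_or_essSup_lt hlam.2 with h | h
  · refine (hη _ ?_ (by rw [measure_smul]; exact hE.measure_sub_le)).not_gt (h.trans_le hsmall)
    exact (smul_set_subset_mul hsL).trans ((mul_subset_mul_left hE.2.1).trans subset_union_left)
  · refine (hη _ ?_ (by rw [measure_smul]; exact hE.measure_sub_le)).not_gt (h.trans_le hsmall)
    exact (smul_set_subset_mul (inv_mem_inv.mpr hsL)).trans
      ((mul_subset_mul_left hE.2.1).trans subset_union_right)

end Translates

variable {G : Type*} [Group G] [TopologicalSpace G] [IsTopologicalGroup G]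
  [LocallyCompactSpace G] [SecondCountableTopology G]
  [MeasurableSpace G] [BorelSpace G]

theorem essSup_small_outside_compact_general
    (μ : Measure G) [μ.IsHaarMeasure]
    (S : Set G)
    (ω : G → ℝ) (hpos : ∀ t, 0 < ω t)
    (Γ : Set ℂ)
    (hyp : ∀ K : Set G, IsCompact K → ∀ ε δ : ℝ, 0 < ε → 0 < δ →
      ∃ s ∈ S, ∃ lam ∈ Γ \ {0}, ∃ E : Set G, IsCompact E ∧ E ⊆ K ∧
        μ (K \ E) < ENNReal.ofReal δ ∧
        ENNReal.ofReal (‖lam‖) *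
          essSup (fun t => ENNReal.ofReal (ω t)) (μ.restrict (s • E)) <
            ENNReal.ofReal ε ∧
        (ENNReal.ofReal (‖lam‖))⁻¹ *
          essSup (fun t => ENNReal.ofReal (ω t)) (μ.restrict (s⁻¹ • E)) <
            ENNReal.ofReal ε) :
    ∀ K : Set G, IsCompact K → ∀ L : Set G, IsCompact L →
      ∀ ε δ : ℝ, 0 < ε → 0 < δ →
        ∃ s ∈ S \ L, ∃ lam ∈ Γ \ {0}, ∃ E : Set G, IsCompact E ∧ E ⊆ K ∧
          μ (K \ E) < ENNReal.ofReal δ ∧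
          ENNReal.ofReal (‖lam‖) *
            essSup (fun t => ENNReal.ofReal (ω t)) (μ.restrict (s • E)) <
              ENNReal.ofReal ε ∧
          (ENNReal.ofReal (‖lam‖))⁻¹ *
            essSup (fun t => ENNReal.ofReal (ω t)) (μ.restrict (s⁻¹ • E)) <
              ENNReal.ofReal ε := by
  intro K hK L hL ε δ hε hδ
  by_cases hK0 : μ K = 0
  · obtain ⟨K₁, hK₁, hK₁1⟩ := exists_compact_mem_nhds (1 : G)
    obtain ⟨s, hs, lam, hlam, -⟩ := exists_smallOnTranslates_notMem hpos hK₁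
      (Measure.measure_pos_of_mem_nhds μ hK₁1).ne' (hyp K₁ hK₁) hL hε hδ
    exact ⟨s, hs, lam, hlam, ∅, smallOnTranslates_empty hK0 hε hδ⟩
  · exact exists_smallOnTranslates_notMem hpos hK hK0 (hyp K hK) hL hε hδ

/-- Under the sufficient condition of Theorem 18, the translation `s` can in addition
be chosen outside any prescribed compact set `L`. -/
theorem essSup_small_outside_compact
    (hnc : ¬ CompactSpace G) (μ : Measure G) [μ.IsHaarMeasure]
    (S : Set G) (p : ℝ) (hp : 1 ≤ p)
    (ω : G → ℝ) (hpos : ∀ t, 0 < ω t)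
    (Γ : Set ℂ) (hΓ : (Γ \ {0}).Nonempty)
    (hloc : LocPIntegrable μ p ω) (hadm : SAdmissible μ ω S)
    (hyp : ∀ K : Set G, IsCompact K → ∀ ε δ : ℝ, 0 < ε → 0 < δ →
      ∃ s ∈ S, ∃ lam ∈ Γ \ {0}, ∃ E : Set G, IsCompact E ∧ E ⊆ K ∧
        μ (K \ E) < ENNReal.ofReal δ ∧
        ENNReal.ofReal (‖lam‖) *
          essSup (fun t => ENNReal.ofReal (ω t)) (μ.restrict (s • E)) <
            ENNReal.ofReal ε ∧
        (ENNReal.ofReal (‖lam‖))⁻¹ *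
          essSup (fun t => ENNReal.ofReal (ω t)) (μ.restrict (s⁻¹ • E)) <
            ENNReal.ofReal ε) :
    ∀ K : Set G, IsCompact K → ∀ L : Set G, IsCompact L →
      ∀ ε δ : ℝ, 0 < ε → 0 < δ →
        ∃ s ∈ S \ L, ∃ lam ∈ Γ \ {0}, ∃ E : Set G, IsCompact E ∧ E ⊆ K ∧
          μ (K \ E) < ENNReal.ofReal δ ∧
          ENNReal.ofReal (‖lam‖) *
            essSup (fun t => ENNReal.ofReal (ω t)) (μ.restrict (s • E)) <
              ENNReal.ofReal ε ∧
          (ENNReal.ofReal (‖lam‖))⁻¹ *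
            essSup (fun t => ENNReal.ofReal (ω t)) (μ.restrict (s⁻¹ • E)) <
              ENNReal.ofReal ε :=
  essSup_small_outside_compact_general μ S ω hpos Γ hyp
end
end
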